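/- arXiv:2601.09957 — 2 statements merged into one kernel-verified Lean document; each statement's English description precedes it below -/
import Mathlib

section
/- Let G be a simple graph on a finite vertex set V, let M be a module over the field 𝔽₂, let W assign to each edge of G an element of M, and let e₀ be a fixed edge of G with endpoints a and b. Suppose f : V × V → 𝔽₂ satisfies: for every edge {n,m} of G, f(n,m) + f(m,n) = 1 if {n,m} = e₀ and f(n,m) + f(m,n) = 0 otherwise. Then ∑ over vertices n ∈ V of ∑ over neighbors m of n of f(n,m) • W({n,m}) equals W(e₀). -/
/-- Correctness of the unit-subpacketization PIR scheme for general graphs: if the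
two query weights of every edge agree except on the desired edge `{a,b}`, where they
differ, then the XOR of all server responses equals the desired file `W {a,b}`. -/
theorem graph_pir_correctness {V : Type*} [Fintype V] [DecidableEq V]
    (G : SimpleGraph V) [DecidableRel G.Adj]
    (M : Type*) [AddCommGroup M] [Module (ZMod 2) M]
    (W : Sym2 V → M) (a b : V) (hab : G.Adj a b)
    (f : V × V → ZMod 2)
    (hf : ∀ n m : V, G.Adj n m →
      f (n, m) + f (m, n) = if s(n, m) = s(a, b) then 1 else 0) :
    ∑ n : V, ∑ m ∈ G.neighborFinset n, f (n, m) • W s(n, m) = W s(a, b) := by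
  classical
  set T : Finset (V × V) := Finset.univ.filter (fun p : V × V => G.Adj p.1 p.2) with hT
  have h1 : ∑ n : V, ∑ m ∈ G.neighborFinset n, f (n, m) • W s(n, m)
      = ∑ p ∈ T, f p • W s(p.1, p.2) := by
    rw [hT, Finset.sum_filter, Fintype.sum_prod_type]
    refine Finset.sum_congr rfl fun n _ => ?_
    rw [← Finset.sum_filter]
    refine Finset.sum_congr ?_ fun m _ => rfl
    ext m
    simp [SimpleGraph.mem_neighborFinset]
  have hmaps : ∀ p ∈ T, s(p.1, p.2) ∈ G.edgeFinset := by
    intro p hp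
    rw [hT, Finset.mem_filter] at hp
    exact SimpleGraph.mem_edgeFinset.mpr hp.2
  have h2 : ∑ e ∈ G.edgeFinset, ∑ p ∈ T.filter (fun p => s(p.1, p.2) = e),
      f p • W s(p.1, p.2) = ∑ p ∈ T, f p • W s(p.1, p.2) :=
    Finset.sum_fiberwise_of_maps_to hmaps _
  have h3 : ∀ e ∈ G.edgeFinset,
      (∑ p ∈ T.filter (fun p => s(p.1, p.2) = e), f p • W s(p.1, p.2))
        = if e = s(a, b) then W e else 0 := by
    intro e he
    induction e using Sym2.ind with
    | _ x y =>
      have hadj : G.Adj x y := by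
        rw [SimpleGraph.mem_edgeFinset] at he; exact he
      have hne : x ≠ y := hadj.ne
      have hfib : T.filter (fun p => s(p.1, p.2) = s(x, y)) = {(x, y), (y, x)} := by
        ext p
        simp only [Finset.mem_filter, hT, Finset.mem_univ, true_and,
          Finset.mem_insert, Finset.mem_singleton]
        constructor
        · rintro ⟨_, hs⟩
          rw [Sym2.eq_iff] at hs
          rcases hs with ⟨h1, h2⟩ | ⟨h1, h2⟩
          · left; exact Prod.ext h1 h2
          · right; exact Prod.ext h1 h2
        · rintro (rfl | rfl)
          · exact ⟨hadj, rfl⟩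
          · exact ⟨hadj.symm, by rw [Sym2.eq_swap]⟩
      rw [hfib, Finset.sum_insert (by simp [hne, Ne.symm hne])]
      simp only [Finset.sum_singleton]
      have : s(y, x) = s(x, y) := Sym2.eq_swap
      rw [this, ← add_smul, hf x y hadj]
      split <;> simp
  rw [h1, ← h2, Finset.sum_congr rfl h3, Finset.sum_ite_eq' G.edgeFinset s(a, b) W,
    if_pos (SimpleGraph.mem_edgeFinset.mpr hab)]
end

section
/- For every real number s ≥ 2, 2s − 2 + 1/(s+1) < 2·√(s²−1) − 1 + 1/(√(s²−1) + 1). -/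
/-- For `s ≥ 2`, the download `2s − 2 + 1/(s+1)` of the new star-graph scheme is
strictly smaller than the download `2√(s²−1) − 1 + 1/(√(s²−1)+1)` of the scheme of
Sadeh et al. -/
theorem star_pir_beats_prior (s : ℝ) (hs : 2 ≤ s) :
    2 * s - 2 + 1 / (s + 1)
      < 2 * Real.sqrt (s ^ 2 - 1) - 1 + 1 / (Real.sqrt (s ^ 2 - 1) + 1) := by
  set t := Real.sqrt (s ^ 2 - 1) with ht
  have h1 : (0:ℝ) ≤ s ^ 2 - 1 := by nlinarith
  have ht2 : t ^ 2 = s ^ 2 - 1 := Real.sq_sqrt h1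
  have ht1 : 1 < t := by nlinarith [Real.sqrt_nonneg (s ^ 2 - 1)]
  have hts : t < s := by nlinarith
  have hp1 : (0:ℝ) < t + 1 := by linarith
  have hp2 : (0:ℝ) < s + 1 := by linarith
  have ha : (t + 1) * (1 / (t + 1)) = 1 := mul_one_div_cancel (ne_of_gt hp1)
  have hb : (s + 1) * (1 / (s + 1)) = 1 := mul_one_div_cancel (ne_of_gt hp2)
  have hc : 0 < 1 / (t + 1) := by positivity
  have hd : 0 < 1 / (s + 1) := by positivity
  nlinarith [mul_pos hp1 hp2, sq_nonneg (s - t), mul_pos hc hd]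
end
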